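/- If d is an optimal recursively enumerable supermartingale (i.e., for every r.e. supermartingale d' there is a positive rational constant c with d(σ) ≥ c·d'(σ) for all strings σ), then for every class R ⊆ 2^ω, the effective Hausdorff dimension of R equals the supremum over A ∈ R of the effective Hausdorff dimension of {A}. -/

import Mathlib

open scoped ENNReal

attribute [local instance] Classical.propDecidable

/-- Cantor space `2^ω`. -/
abbrev Cantor := ℕ → Bool

/-- The length-`n` initial segment `X↾n` of `X ∈ 2^ω`, as a finite binary string. -/
def seg (X : Cantor) (n : ℕ) : List Bool := (List.range n).map X

/-- `σ ≺ X` : the finite string `σ` is an initial segment of `X`. -/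
def PrefixOfSeq (σ : List Bool) (X : Cantor) : Prop := seg X σ.length = σ

/-- The basic clopen set `[σ]` of all infinite sequences extending `σ`. -/
def cyl (σ : List Bool) : Set Cantor := {X | PrefixOfSeq σ X}

/-- Partial recursive functions relative to a (total) oracle `O : ℕ → ℕ`:
the oracle version of `Nat.Partrec`. -/
inductive RecursiveInTotalOracle (O : ℕ → ℕ) : (ℕ →. ℕ) → Prop
  | oracle : RecursiveInTotalOracle O (fun n => Part.some (O n))
  | zero : RecursiveInTotalOracle O (pure 0)
  | succ : RecursiveInTotalOracle O Nat.succ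
  | left : RecursiveInTotalOracle O ↑fun n : ℕ => n.unpair.1
  | right : RecursiveInTotalOracle O ↑fun n : ℕ => n.unpair.2
  | pair {f g} : RecursiveInTotalOracle O f → RecursiveInTotalOracle O g →
      RecursiveInTotalOracle O fun n => Nat.pair <$> f n <*> g n
  | comp {f g} : RecursiveInTotalOracle O f → RecursiveInTotalOracle O g →
      RecursiveInTotalOracle O fun n => g n >>= f
  | prec {f g} : RecursiveInTotalOracle O f → RecursiveInTotalOracle O g →
      RecursiveInTotalOracle O (Nat.unpaired fun a n =>
        n.rec (f a) fun y IH => do let i ← IH; g (Nat.pair a (Nat.pair y i)))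
  | rfind {f} : RecursiveInTotalOracle O f →
      RecursiveInTotalOracle O fun a => Nat.rfind fun n => (fun m => m = 0) <$> f (Nat.pair a n)

/-- A (total) function between coded types is recursive in the oracle `O`. -/
def RecIn {α β : Type} [Primcodable α] [Primcodable β] (O : ℕ → ℕ) (f : α → β) : Prop :=
  RecursiveInTotalOracle O fun n =>
    (Part.ofOption (Encodable.decode (α := α) n)).bind fun a => Part.some (Encodable.encode (f a))

/-- A set `X ∈ 2^ω` viewed as a total oracle. -/
def oracleOf (X : Cantor) : ℕ → ℕ := fun n => cond (X n) 1 0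

/-- A function between coded types viewed as a total oracle on `ℕ`. -/
def oracleFn {α β : Type} [Primcodable α] [Primcodable β] (f : α → β) : ℕ → ℕ :=
  fun n => Encodable.encode ((Encodable.decode (α := α) n).map f)

/-- Turing reducibility `X ≤_T Y` between elements of `2^ω`. -/
def TRed (X Y : Cantor) : Prop := RecIn (oracleOf Y) X

/-- Turing equivalence `X ≡_T Y`. -/
def TEquiv (X Y : Cantor) : Prop := TRed X Y ∧ TRed Y X

/-- The Turing degree of `Z`, as a set of reals. -/
def degCl (Z : Cantor) : Set Cantor := {Y | TEquiv Y Z}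

/-- Many-one reducibility `X ≤_m Y` between subsets of `ω` (as elements of `2^ω`). -/
def ManyOneRed (X Y : Cantor) : Prop := ∃ g : ℕ → ℕ, Computable g ∧ ∀ n, X n = Y (g n)

/-- The recursive join `A ⊕ B`. -/
def join (A B : Cantor) : Cantor := fun n => if n % 2 = 0 then A (n / 2) else B (n / 2)

/-- `X` is of minimal Turing degree. -/
def MinimalDeg (X : Cantor) : Prop :=
  ¬Computable X ∧ ∀ Y : Cantor, TRed Y X → Computable Y ∨ TRed X Y

/-- `B` is a minimal cover of the countable class `S`: `B` strictly bounds every member of `S`,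
and everything below `B` is either below some member of `S` or joins with one above `B`. -/
def MinimalCoverOf (B : Cantor) (S : Set Cantor) : Prop :=
  (∀ A ∈ S, TRed A B ∧ ¬TRed B A) ∧
  ∀ C : Cantor, TRed C B → ∃ A ∈ S, TRed C A ∨ TRed B (join A C)

/-- `R` is of hyperimmune-free degree: every function it computes is dominated by a
computable function. -/
def HypImmFree (R : Cantor) : Prop :=
  ∀ f : ℕ → ℕ, RecIn (oracleOf R) f → ∃ g : ℕ → ℕ, Computable g ∧ ∀ n, f n ≤ g n

/-- `d` is a supermartingale. -/
def IsSupermartingale (d : List Bool → ℝ) : Prop :=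
  (∀ σ, 0 ≤ d σ) ∧ ∀ σ, d (σ ++ [false]) + d (σ ++ [true]) ≤ 2 * d σ

/-- `d` is a martingale. -/
def IsMartingale (d : List Bool → ℝ) : Prop :=
  (∀ σ, 0 ≤ d σ) ∧ ∀ σ, d (σ ++ [false]) + d (σ ++ [true]) = 2 * d σ

/-- `d` is lower semicomputable (r.e.) relative to oracle `O`: it is the monotone limit of a
uniformly `O`-recursive sequence of rationals. -/
def LowerSemicomputableIn (O : ℕ → ℕ) (d : List Bool → ℝ) : Prop :=
  ∃ q : List Bool × ℕ → ℚ, RecIn O q ∧ (∀ σ, Monotone fun n => q (σ, n)) ∧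
    ∀ σ, Filter.Tendsto (fun n => (q (σ, n) : ℝ)) Filter.atTop (nhds (d σ))

/-- `d` is lower semicomputable (an r.e. supermartingale value function). -/
def LowerSemicomputable (d : List Bool → ℝ) : Prop :=
  ∃ q : List Bool × ℕ → ℚ, Computable q ∧ (∀ σ, Monotone fun n => q (σ, n)) ∧
    ∀ σ, Filter.Tendsto (fun n => (q (σ, n) : ℝ)) Filter.atTop (nhds (d σ))

/-- `d` `s`-succeeds on `X`: `limsup_n d(X↾n)/2^{(1-s)n} = ∞`
(equivalently, the sequence is unbounded). -/
def Succeeds (d : List Bool → ℝ) (s : ℚ) (X : Cantor) : Prop :=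
  ∀ C : ℝ, ∃ n : ℕ, C * (2 : ℝ) ^ ((1 - (s : ℝ)) * n) ≤ d (seg X n)

/-- `d` strongly `s`-succeeds on `X`: `liminf_n d(X↾n)/2^{(1-s)n} = ∞`. -/
def SucceedsStrongly (d : List Bool → ℝ) (s : ℚ) (X : Cantor) : Prop :=
  ∀ C : ℝ, ∃ N : ℕ, ∀ n ≥ N, C * (2 : ℝ) ^ ((1 - (s : ℝ)) * n) ≤ d (seg X n)

/-- Generic dimension notion: the infimum of all `s ∈ ℚ ∩ [0,1]` such that some supermartingale
satisfying `P` succeeds (in the sense of `Succ`) on every member of `A` (with value `1` if there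
is no such `s`). -/
noncomputable def dimVia (P : (List Bool → ℝ) → Prop)
    (Succ : (List Bool → ℝ) → ℚ → Cantor → Prop) (A : Set Cantor) : ℝ≥0∞ :=
  sInf ({1} ∪ {x : ℝ≥0∞ | ∃ s : ℚ, 0 ≤ s ∧ s ≤ 1 ∧ x = ENNReal.ofReal (s : ℝ) ∧
    ∃ d, IsSupermartingale d ∧ P d ∧ ∀ X ∈ A, Succ d s X})

/-- Effective Hausdorff dimension of a class (Lutz). -/
noncomputable def effDim (A : Set Cantor) : ℝ≥0∞ := dimVia LowerSemicomputable Succeeds A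

/-- Effective Hausdorff dimension relative to oracle `O`. -/
noncomputable def effDimIn (O : ℕ → ℕ) (A : Set Cantor) : ℝ≥0∞ :=
  dimVia (LowerSemicomputableIn O) Succeeds A

/-- Effective packing dimension of a class. -/
noncomputable def effPDim (A : Set Cantor) : ℝ≥0∞ := dimVia LowerSemicomputable SucceedsStrongly A

/-- Effective packing dimension relative to oracle `O`. -/
noncomputable def effPDimIn (O : ℕ → ℕ) (A : Set Cantor) : ℝ≥0∞ :=
  dimVia (LowerSemicomputableIn O) SucceedsStrongly A

/-- (Classical) Hausdorff dimension of a subset of `2^ω`, via the point-to-set principle: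
the infimum over all oracles `Z` of the effective-in-`Z` Hausdorff dimension. -/
noncomputable def hausdorffDim (A : Set Cantor) : ℝ≥0∞ := ⨅ Z : Cantor, effDimIn (oracleOf Z) A

/-- (Classical) packing dimension of a subset of `2^ω`, via the point-to-set principle. -/
noncomputable def packingDim (A : Set Cantor) : ℝ≥0∞ := ⨅ Z : Cantor, effPDimIn (oracleOf Z) A

/-- The canonical enumeration `n ↦ D_n` of finite subsets of `ω`: `D_n` is the set of
positions of 1-bits in the binary expansion of `n`. -/
def Dfin (n : ℕ) : Finset ℕ := (Finset.range n).filter fun i => n.testBit i = true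

/-- `A` is recursively traceable. -/
def RecTraceable (A : Cantor) : Prop :=
  ∃ b : ℕ → ℕ, Computable b ∧ ∀ f : ℕ → ℕ, RecIn (oracleOf A) f →
    ∃ g : ℕ → ℕ, Computable g ∧ ∀ n, (Dfin (g n)).card ≤ b n ∧ f n ∈ Dfin (g n)

/-- A function tree: `T(σi)` properly extends `T(σ)`, and `T(σ0)`, `T(σ1)` are incomparable. -/
structure FunTree where
  f : List Bool → List Bool
  extend : ∀ σ (i : Bool), f σ <+: f (σ ++ [i]) ∧ (f σ).length < (f (σ ++ [i])).length
  split : ∀ σ, ¬ f (σ ++ [false]) <+: f (σ ++ [true]) ∧ ¬ f (σ ++ [true]) <+: f (σ ++ [false])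

/-- `[T]`, the set of infinite paths through the function tree `T`. -/
def Paths (T : FunTree) : Set Cantor :=
  {X | ∃ Y : Cantor, ∀ n, PrefixOfSeq (T.f (seg Y n)) X}

/-- `T ≤_T Y` for a function tree `T` and a real `Y`. -/
def TreeRedToReal (T : FunTree) (Y : Cantor) : Prop := RecIn (oracleOf Y) T.f

/-- `Y ≤_T T` for a real `Y` and a function tree `T` (the tree used as an oracle). -/
def RealRedToTree (Y : Cantor) (T : FunTree) : Prop := RecIn (oracleFn T.f) Y

/-- `S ≤_T T` between function trees. -/
def TreeRedToTree (S T : FunTree) : Prop := RecIn (oracleFn T.f) S.f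

/-- `T` is recursively pointed: every path of `T` computes `T`. -/
def RecPointed (T : FunTree) : Prop := ∀ X ∈ Paths T, TreeRedToReal T X

/-- The binary value of a string (read most-significant-bit first); strings of equal
length are lexicographically ordered exactly as their values. -/
def natOfStr (σ : List Bool) : ℕ := σ.foldl (fun a b => 2 * a + cond b 1 0) 0

/-- The length-`len` binary string with value `k`. -/
def strOfNat (len k : ℕ) : List Bool := (List.range len).map fun i => k.testBit (len - 1 - i)

/-- `l(σ) = Σ_{|τ|=|σ|, τ <_L σ} ν([τ])`, computed via the value correspondence between the
lexicographic order on strings of equal length and the numeric order of their values. -/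
noncomputable def lfun (ν : MeasureTheory.Measure Cantor) (σ : List Bool) : ℝ :=
  ∑ k ∈ Finset.range (natOfStr σ), (ν (cyl (strOfNat σ.length k))).toReal

/-- `r(σ) = l(σ) + ν([σ])`. -/
noncomputable def rfun (ν : MeasureTheory.Measure Cantor) (σ : List Bool) : ℝ :=
  lfun ν σ + (ν (cyl σ)).toReal

/-- `0.A`: the real number in `[0,1]` with binary expansion `A`. -/
noncomputable def realOf (A : Cantor) : ℝ := ∑' n : ℕ, cond (A n) ((2 : ℝ)⁻¹ ^ (n + 1)) 0

/-- The weight `2^{-|σ|}` of an (optional) string, for measuring Martin-Löf tests. -/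
noncomputable def testWeight : Option (List Bool) → ℝ≥0∞
  | none => 0
  | some σ => (2 : ℝ≥0∞)⁻¹ ^ σ.length

/-- `V` is a Martin-Löf test: a uniformly computable enumeration whose `n`-th level has
total weight at most `2^{-n}`. -/
def MLTest (V : ℕ × ℕ → Option (List Bool)) : Prop :=
  Computable V ∧ ∀ n, (∑' k : ℕ, testWeight (V (n, k))) ≤ (2 : ℝ≥0∞)⁻¹ ^ n

/-- `X` is covered by the test `V` (belongs to every level). -/
def MLCovered (V : ℕ × ℕ → Option (List Bool)) (X : Cantor) : Prop :=
  ∀ n, ∃ k σ, V (n, k) = some σ ∧ PrefixOfSeq σ X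

/-- `X` is 1-random (Martin-Löf random). -/
def MLRandom (X : Cantor) : Prop := ∀ V, MLTest V → ¬MLCovered V X

/-- An antichain of Turing degrees (containing no computable set, closed under Turing
equivalence, with Turing-inequivalent members pairwise incomparable). -/
def IsAntichainDeg (B : Set Cantor) : Prop :=
  (∀ X ∈ B, ¬Computable X) ∧ (∀ X ∈ B, ∀ Y, TEquiv Y X → Y ∈ B) ∧
  ∀ X ∈ B, ∀ Y ∈ B, ¬TEquiv X Y → ¬TRed X Y ∧ ¬TRed Y X

/-- A maximal antichain of Turing degrees. -/
def MaximalAntichainDeg (B : Set Cantor) : Prop :=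
  IsAntichainDeg B ∧ ∀ Z ∉ B, ¬IsAntichainDeg (B ∪ degCl Z)

/-- A chain of Turing degrees. -/
def IsChainDeg (A : Set Cantor) : Prop :=
  (∀ X ∈ A, ∀ Y, TEquiv Y X → Y ∈ A) ∧
  ∀ X ∈ A, ∀ Y ∈ A, ¬TEquiv X Y → TRed X Y ∨ TRed Y X

/-- A maximal chain of Turing degrees. -/
def MaximalChainDeg (A : Set Cantor) : Prop :=
  IsChainDeg A ∧ ∀ Z ∉ A, ¬IsChainDeg (A ∪ degCl Z)

/-- The first uncountable ordinal `ω₁`. -/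
noncomputable def omega1 : Ordinal := (Cardinal.aleph 1).ord

/-!
Monotonicity of `effDim` gives `⨆ A ∈ R, effDim {A} ≤ effDim R`. Conversely, let `s` be a
rational above the supremum. Each `A ∈ R` is `s'`-succeeded on by some r.e. supermartingale for
some `s' < s`; the optimal `d` dominates it up to a constant, so `d` itself `s`-succeeds on `A`.
Thus the single supermartingale `d` witnesses `effDim R ≤ s`.
-/

namespace Succeeds

variable {d d' : List Bool → ℝ} {s s' : ℚ} {X : Cantor}

theorem mono (h : Succeeds d s' X) (hs : s' ≤ s) : Succeeds d s X := by
  intro C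
  obtain ⟨n, hn⟩ := h (max C 0)
  refine ⟨n, le_trans ?_ hn⟩
  have hexp : (1 - (s : ℝ)) * n ≤ (1 - (s' : ℝ)) * n := by
    have : (s' : ℝ) ≤ s := by exact_mod_cast hs
    gcongr
  calc C * (2 : ℝ) ^ ((1 - (s : ℝ)) * n)
      ≤ max C 0 * (2 : ℝ) ^ ((1 - (s : ℝ)) * n) := by gcongr; exact le_max_left C 0
    _ ≤ max C 0 * (2 : ℝ) ^ ((1 - (s' : ℝ)) * n) := by gcongr; exact one_le_two

theorem of_const_mul_le {c : ℝ} (hc : 0 < c) (hcd : ∀ σ, c * d' σ ≤ d σ)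
    (h : Succeeds d' s X) : Succeeds d s X := by
  intro C
  obtain ⟨n, hn⟩ := h (C / c)
  refine ⟨n, ?_⟩
  calc C * (2 : ℝ) ^ ((1 - (s : ℝ)) * n)
      = c * (C / c * (2 : ℝ) ^ ((1 - (s : ℝ)) * n)) := by field_simp
    _ ≤ c * d' (seg X n) := by gcongr
    _ ≤ d (seg X n) := hcd _

end Succeeds

section dimVia

variable {P : (List Bool → ℝ) → Prop} {Succ : (List Bool → ℝ) → ℚ → Cantor → Prop}

theorem dimVia_le_one (A : Set Cantor) : dimVia P Succ A ≤ 1 :=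
  sInf_le (Or.inl rfl)

theorem dimVia_mono {A B : Set Cantor} (hAB : A ⊆ B) : dimVia P Succ A ≤ dimVia P Succ B := by
  refine sInf_le_sInf ?_
  rintro x (hx | ⟨s, hs0, hs1, hx, d, hd, hP, hB⟩)
  · exact Or.inl hx
  · exact Or.inr ⟨s, hs0, hs1, hx, d, hd, hP, fun X hX => hB X (hAB hX)⟩

theorem dimVia_le_ofReal {A : Set Cantor} {s : ℚ} (hs0 : 0 ≤ s) (hs1 : s ≤ 1)
    {d : List Bool → ℝ} (hd : IsSupermartingale d) (hP : P d) (hA : ∀ X ∈ A, Succ d s X) :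
    dimVia P Succ A ≤ ENNReal.ofReal s :=
  sInf_le (Or.inr ⟨s, hs0, hs1, rfl, d, hd, hP, hA⟩)

theorem exists_succeeds_of_dimVia_lt {A : Set Cantor} {s : ℚ} (hs1 : s ≤ 1)
    (h : dimVia P Succ A < ENNReal.ofReal s) :
    ∃ s' < s, ∃ d, IsSupermartingale d ∧ P d ∧ ∀ X ∈ A, Succ d s' X := by
  obtain ⟨x, hx | ⟨s', -, -, rfl, d, hd, hP, hA⟩, hxs⟩ := sInf_lt_iff.mp h
  · have : ENNReal.ofReal s ≤ 1 := ENNReal.ofReal_le_one.mpr (by exact_mod_cast hs1)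
    rw [Set.mem_singleton_iff.mp hx] at hxs
    exact (hxs.trans_le this).false.elim
  · have hss' := (ENNReal.ofReal_lt_ofReal_iff'.mp hxs).1
    exact ⟨s', by exact_mod_cast hss', d, hd, hP, hA⟩

end dimVia

theorem ENNReal.le_of_forall_rat_lt_imp_le {x y : ℝ≥0∞} (hx : x ≤ 1)
    (h : ∀ s : ℚ, 0 ≤ s → s ≤ 1 → y < ENNReal.ofReal s → x ≤ ENNReal.ofReal s) : x ≤ y := by
  by_contra! hyx
  obtain ⟨s, hs0, hys, hsx⟩ := ENNReal.lt_iff_exists_rat_btwn.mp hyx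
  have hs1 : s ≤ 1 := by
    have : ENNReal.ofReal s ≤ 1 := hsx.le.trans hx
    exact_mod_cast ENNReal.ofReal_le_one.mp this
  exact (h s hs0 hs1 hys).not_gt hsx

def IsOptimal (d : List Bool → ℝ) : Prop :=
  ∀ d' : List Bool → ℝ, IsSupermartingale d' → LowerSemicomputable d' →
    ∃ c : ℚ, 0 < c ∧ ∀ σ, (c : ℝ) * d' σ ≤ d σ

theorem IsOptimal.succeeds_of_effDim_lt {d : List Bool → ℝ} (hopt : IsOptimal d) {X : Cantor}
    {s : ℚ} (hs1 : s ≤ 1) (h : effDim {X} < ENNReal.ofReal s) : Succeeds d s X := by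
  obtain ⟨s', hs', d', hd', hre', hX⟩ := exists_succeeds_of_dimVia_lt hs1 h
  obtain ⟨c, hc, hcd⟩ := hopt d' hd' hre'
  exact ((hX X rfl).mono hs'.le).of_const_mul_le (by exact_mod_cast hc) hcd

/-- If `d` is an optimal r.e. supermartingale, then for every class
`R ⊆ 2^ω` the effective Hausdorff dimension of `R` is the supremum of the effective
Hausdorff dimensions of its members. -/
theorem stmt0 (d : List Bool → ℝ) (hd : IsSupermartingale d) (hre : LowerSemicomputable d)
    (hopt : ∀ d' : List Bool → ℝ, IsSupermartingale d' → LowerSemicomputable d' →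
      ∃ c : ℚ, 0 < c ∧ ∀ σ, (c : ℝ) * d' σ ≤ d σ)
    (R : Set Cantor) :
    effDim R = ⨆ A ∈ R, effDim {A} := by
  refine le_antisymm ?_ (iSup₂_le fun A hA => dimVia_mono (Set.singleton_subset_iff.mpr hA))
  refine ENNReal.le_of_forall_rat_lt_imp_le (dimVia_le_one R) fun s hs0 hs1 hsup => ?_
  refine dimVia_le_ofReal hs0 hs1 hd hre fun X hX => ?_
  have hX : effDim {X} < ENNReal.ofReal s :=
    (le_iSup₂ (f := fun A (_ : A ∈ R) => effDim {A}) X hX).trans_lt hsup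
  exact IsOptimal.succeeds_of_effDim_lt hopt hs1 hX
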